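/- arXiv:1909.12538 — 6 statements merged into one kernel-verified Lean document; each statement's English description precedes it below -/
import Mathlib

section
/- Let f be a homogeneous polynomial of degree d ≥ 2 in n variables over ℂ with f = l_1^d + ⋯ + l_r^d, where the coefficient vectors of the linear forms l_1, …, l_r are linearly independent. Then a nonzero vector p ∈ ℂ^n is a singular point of f if and only if l_1(p) = ⋯ = l_r(p) = 0; that is, the singular locus of f is exactly the projectivization of ⋂_{i=1}^r ker(l_i). -/
open MvPolynomial

/-- The linear form with coefficient vector `v`. -/
noncomputable def linForm {n : ℕ} (v : Fin n → ℂ) : MvPolynomial (Fin n) ℂ :=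
  ∑ i, C (v i) * X i

lemma eval_pderiv_linForm {n : ℕ} (v : Fin n → ℂ) (i : Fin n) (p : Fin n → ℂ) :
    eval p (pderiv i (linForm v)) = v i := by
  simp [linForm, pderiv_X, Pi.single_apply, eq_comm (a := i)]

theorem stmt1 {n d r : ℕ} (hd : 2 ≤ d)
    (f : MvPolynomial (Fin n) ℂ) (hhom : f.IsHomogeneous d)
    (v : Fin r → Fin n → ℂ) (hv : LinearIndependent ℂ v)
    (hf : f = ∑ j, (linForm (v j)) ^ d)
    (p : Fin n → ℂ) (hp : p ≠ 0) :
    (∀ i, eval p (pderiv i f) = 0) ↔ (∀ j, eval p (linForm (v j)) = 0) := by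
  have key : ∀ i, eval p (pderiv i f) =
      ∑ j, (d : ℂ) * (eval p (linForm (v j))) ^ (d - 1) * v j i := by
    intro i
    rw [hf, map_sum, map_sum]
    refine Finset.sum_congr rfl fun j _ => ?_
    rw [pderiv_pow, map_mul, map_mul, map_natCast, map_pow, eval_pderiv_linForm]
  constructor
  · intro h j
    have h0 : ∀ i, ∑ k, ((d : ℂ) * (eval p (linForm (v k))) ^ (d - 1)) • v k i = 0 := by
      intro i
      simp only [smul_eq_mul]; rw [← key i, h i]
    have := Fintype.linearIndependent_iff.mp hv
      (fun k => (d : ℂ) * (eval p (linForm (v k))) ^ (d - 1)) (by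
        funext i
        simpa using h0 i) j
    have hd0 : (d : ℂ) ≠ 0 := Nat.cast_ne_zero.mpr (by omega)
    have := (mul_eq_zero.mp this).resolve_left hd0
    have := pow_eq_zero_iff (n := d - 1) (by omega) |>.mp this
    exact this
  · intro h i
    rw [key i]
    refine Finset.sum_eq_zero fun j _ => ?_
    rw [h j, zero_pow (by omega), mul_zero, zero_mul]
end

section
/- Let f be a homogeneous polynomial of degree d ≥ 2 in n variables over ℂ with f = l_1^d + ⋯ + l_r^d for linear forms l_1, …, l_r. If p ∈ ℂ^n is a nonzero vector at which all first-order partial derivatives of f vanish, and q ∈ ℂ^n satisfies l_1(q) = ⋯ = l_r(q) = 0, then all first-order partial derivatives of f also vanish at p + q. Consequently, every singular point of f lies in a linear space of singular points of dimension at least n − k, where k is the dimension of the span of the coefficient vectors of l_1, …, l_r. -/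
open MvPolynomial

lemma eval_linForm {n : ℕ} (v x : Fin n → ℂ) :
    eval x (linForm v) = ∑ i, v i * x i := by
  simp [linForm]

lemma pderiv_linForm {n : ℕ} (v : Fin n → ℂ) (i : Fin n) :
    pderiv i (linForm v) = C (v i) := by
  rw [linForm, map_sum]
  rw [Finset.sum_eq_single i]
  · simp
  · intro j _ hj
    simp [pderiv_X, Pi.single_apply, hj]
  · simp

lemma eval_pderiv {n d r : ℕ}
    (f : MvPolynomial (Fin n) ℂ)
    (v : Fin r → Fin n → ℂ)
    (hf : f = ∑ j, (linForm (v j)) ^ d) (x : Fin n → ℂ) (i : Fin n) :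
    eval x (pderiv i f) =
      ∑ j, (d : ℂ) * v j i * (eval x (linForm (v j))) ^ (d - 1) := by
  subst hf
  rw [map_sum, map_sum]
  congr 1; ext j
  rw [pderiv_pow, pderiv_linForm]
  simp [mul_comm, mul_assoc, mul_left_comm]

theorem stmt3 {n d r : ℕ} (hd : 2 ≤ d)
    (f : MvPolynomial (Fin n) ℂ) (hhom : f.IsHomogeneous d)
    (v : Fin r → Fin n → ℂ)
    (hf : f = ∑ j, (linForm (v j)) ^ d) :
    (∀ p q : Fin n → ℂ, p ≠ 0 → (∀ i, eval p (pderiv i f) = 0) →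
        (∀ j, eval q (linForm (v j)) = 0) →
        ∀ i, eval (p + q) (pderiv i f) = 0) ∧
    (∀ p : Fin n → ℂ, p ≠ 0 → (∀ i, eval p (pderiv i f) = 0) →
      ∃ W : Submodule ℂ (Fin n → ℂ), p ∈ W ∧
        n - Module.finrank ℂ ↥(Submodule.span ℂ (Set.range v)) ≤ Module.finrank ℂ ↥W ∧
        ∀ q ∈ W, q ≠ 0 → ∀ i, eval q (pderiv i f) = 0) := by
  have hlin : ∀ (x y : Fin n → ℂ) (c : ℂ) (w : Fin n → ℂ),
      eval (c • x + y) (linForm w) = c * eval x (linForm w) + eval y (linForm w) := by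
    intro x y c w
    simp only [eval_linForm, Finset.mul_sum, ← Finset.sum_add_distrib]
    congr 1; ext i
    simp [Pi.add_apply, Pi.smul_apply]
    ring
  constructor
  · intro p q hp hsing hq i
    have := hlin p q 1 -- not needed; compute directly
    rw [eval_pderiv f v hf (p + q) i]
    have h1 : ∀ j, eval (p + q) (linForm (v j)) = eval p (linForm (v j)) := by
      intro j
      have := hlin p q 1 (v j)
      simpa [hq j] using this
    calc ∑ j, (d : ℂ) * v j i * (eval (p + q) (linForm (v j))) ^ (d - 1)
        = ∑ j, (d : ℂ) * v j i * (eval p (linForm (v j))) ^ (d - 1) := by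
          simp_rw [h1]
      _ = eval p (pderiv i f) := (eval_pderiv f v hf p i).symm
      _ = 0 := hsing i
  · intro p hp hsing
    set M : Matrix (Fin r) (Fin n) ℂ := Matrix.of v with hM
    set K : Submodule ℂ (Fin n → ℂ) := LinearMap.ker M.mulVecLin with hK
    have hKmem : ∀ q, q ∈ K ↔ ∀ j, eval q (linForm (v j)) = 0 := by
      intro q
      rw [hK, LinearMap.mem_ker]
      constructor
      · intro h j
        have := congrFun h j
        simpa [Matrix.mulVecLin, Matrix.mulVec, dotProduct, eval_linForm, hM] using this
      · intro h
        funext j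
        simpa [Matrix.mulVecLin, Matrix.mulVec, dotProduct, eval_linForm, hM] using h j
    refine ⟨Submodule.span ℂ {p} ⊔ K, Submodule.mem_sup_left (Submodule.mem_span_singleton_self p),
      ?_, ?_⟩
    · have hrank : M.rank = Module.finrank ℂ ↥(Submodule.span ℂ (Set.range v)) := by
        rw [Matrix.rank_eq_finrank_span_row]
        rfl
      have hsum : M.rank + Module.finrank ℂ ↥K = n := by
        rw [Matrix.rank, hK]
        rw [LinearMap.finrank_range_add_finrank_ker]
        simp
      have hKd : Module.finrank ℂ ↥K = n - M.rank := by omega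
      have hle : Module.finrank ℂ ↥K ≤ Module.finrank ℂ ↥(Submodule.span ℂ {p} ⊔ K) :=
        Submodule.finrank_mono le_sup_right
      omega
    · intro q hq hq0 i
      rcases Submodule.mem_sup.mp hq with ⟨a, ha, b, hb, rfl⟩
      rcases Submodule.mem_span_singleton.mp ha with ⟨c, rfl⟩
      have hbz : ∀ j, eval b (linForm (v j)) = 0 := (hKmem b).mp hb
      rw [eval_pderiv f v hf (c • p + b) i]
      have h1 : ∀ j, eval (c • p + b) (linForm (v j)) = c * eval p (linForm (v j)) := by
        intro j
        rw [hlin p b c (v j), hbz j, add_zero]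
      calc ∑ j, (d : ℂ) * v j i * (eval (c • p + b) (linForm (v j))) ^ (d - 1)
          = c ^ (d - 1) * ∑ j, (d : ℂ) * v j i * (eval p (linForm (v j))) ^ (d - 1) := by
            rw [Finset.mul_sum]
            congr 1; ext j
            rw [h1 j, mul_pow]
            ring
        _ = c ^ (d - 1) * eval p (pderiv i f) := by rw [← eval_pderiv f v hf p i]
        _ = 0 := by rw [hsing i, mul_zero]
end

section
/- Let d ≥ 2 and n ≥ 2. If a homogeneous polynomial f of degree d in n variables over ℂ is the coefficientwise limit of a sequence of homogeneous polynomials of degree d, each of which can be written as a sum of at most n − 1 d-th powers of linear forms over ℂ, then f has a singular point. In particular, every polynomial of border rank strictly less than n is singular. -/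
open MvPolynomial

/-- `f` can be written as a sum of `r` `d`-th powers of linear forms. -/
def hasDecomp {n : ℕ} (d : ℕ) (f : MvPolynomial (Fin n) ℂ) (r : ℕ) : Prop :=
  ∃ v : Fin r → Fin n → ℂ, f = ∑ j, (linForm (v j)) ^ d

open Filter Topology

lemma eval_pderiv_eq_sum {n : ℕ} {S : Finset (Fin n →₀ ℕ)}
    {g : MvPolynomial (Fin n) ℂ} (hs : g.support ⊆ S) (i : Fin n) (x : Fin n → ℂ) :
    eval x (pderiv i g) = ∑ μ ∈ S, coeff μ g * eval x (pderiv i (monomial μ (1:ℂ))) := by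
  have hg : g = ∑ μ ∈ S, monomial μ (coeff μ g) := by
    conv_lhs => rw [g.as_sum]
    exact Finset.sum_subset hs fun μ _ hμ => by
      simp [MvPolynomial.notMem_support_iff.mp hμ]
  conv_lhs => rw [hg]
  rw [map_sum, map_sum]
  refine Finset.sum_congr rfl fun μ _ => ?_
  simp [pderiv_monomial, eval_monomial]
  ring

lemma exists_ker_vec {n r : ℕ} (hrn : r < n) (v : Fin r → Fin n → ℂ) :
    ∃ p : Fin n → ℂ, p ≠ 0 ∧ ∀ j, ∑ i, v j i * p i = 0 := by
  let L : (Fin n → ℂ) →ₗ[ℂ] (Fin r → ℂ) :=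
    LinearMap.pi (fun j => ∑ i, v j i • LinearMap.proj i)
  have hni : ¬ Function.Injective L := by
    intro h
    have := LinearMap.finrank_le_finrank_of_injective h
    simp [Module.finrank_pi] at this
    omega
  rw [← LinearMap.ker_eq_bot] at hni
  obtain ⟨p, hpmem, hp0⟩ := Submodule.exists_mem_ne_zero_of_ne_bot hni
  refine ⟨p, hp0, fun j => ?_⟩
  have := LinearMap.mem_ker.mp hpmem
  have hj := congrFun this j
  simpa [L, LinearMap.pi_apply, LinearMap.sum_apply, smul_eq_mul] using hj

theorem stmt4 {n d : ℕ} (hn : 2 ≤ n) (hd : 2 ≤ d)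
    (f : MvPolynomial (Fin n) ℂ) (hhom : f.IsHomogeneous d)
    (g : ℕ → MvPolynomial (Fin n) ℂ)
    (hghom : ∀ m, (g m).IsHomogeneous d)
    (hgr : ∀ m, ∃ r ≤ n - 1, hasDecomp d (g m) r)
    (hlim : ∀ μ : Fin n →₀ ℕ,
      Filter.Tendsto (fun m => coeff μ (g m)) Filter.atTop (nhds (coeff μ f))) :
    ∃ p : Fin n → ℂ, p ≠ 0 ∧ ∀ i, eval p (pderiv i f) = 0 := by
  classical
  -- Step 1: each g m has a unit-norm singular point
  have hq : ∀ m, ∃ q : Fin n → ℂ, ‖q‖ = 1 ∧ ∀ i, eval q (pderiv i (g m)) = 0 := by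
    intro m
    obtain ⟨r, hr, v, hv⟩ := hgr m
    have hrn : r < n := lt_of_le_of_lt hr (by omega)
    obtain ⟨p, hp0, hker⟩ := exists_ker_vec hrn v
    have hpn : ‖p‖ ≠ 0 := norm_ne_zero_iff.mpr hp0
    refine ⟨(‖p‖⁻¹ : ℝ) • p, ?_, ?_⟩
    · rw [norm_smul]
      simp [norm_inv, inv_mul_cancel₀ hpn]
    · intro i
      have hker' : ∀ j, eval ((‖p‖⁻¹ : ℝ) • p) (linForm (v j)) = 0 := by
        intro j
        have : ∑ i, v j i * ((‖p‖⁻¹ : ℂ) * p i) = (‖p‖⁻¹ : ℂ) * ∑ i, v j i * p i := by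
          rw [Finset.mul_sum]; refine Finset.sum_congr rfl fun i _ => by ring
        simp [linForm, eval_sum, Pi.smul_apply, smul_eq_mul, Complex.real_smul, this, hker j]
      rw [hv, map_sum, map_sum]
      refine Finset.sum_eq_zero fun j _ => ?_
      rw [(pderiv i).leibniz_pow]
      simp [hker' j, zero_pow (by omega : d - 1 ≠ 0)]
  choose q hq1 hq2 using hq
  -- Step 2: compactness, pick a convergent subsequence
  have hmem : ∀ m, q m ∈ Metric.sphere (0 : Fin n → ℂ) 1 := by
    intro m; simp [Metric.mem_sphere, dist_zero_right, hq1 m]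
  obtain ⟨p, hpmem, φ, hφ, hconv⟩ :=
    (isCompact_sphere (0 : Fin n → ℂ) 1).tendsto_subseq hmem
  have hp1 : ‖p‖ = 1 := by simpa [Metric.mem_sphere, dist_zero_right] using hpmem
  have hpne : p ≠ 0 := by
    intro h; rw [h] at hp1; simp at hp1
  refine ⟨p, hpne, fun i => ?_⟩
  -- Step 3: finite monomial set
  set D : Fin n →₀ ℕ := Finsupp.equivFunOnFinite.symm (fun _ => d) with hD
  set S : Finset (Fin n →₀ ℕ) := Finset.Iic D with hS
  have hsupp : ∀ h : MvPolynomial (Fin n) ℂ, h.IsHomogeneous d → h.support ⊆ S := by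
    intro h hh μ hμ
    have hdeg : μ.degree = d := by
      by_contra hne
      exact mem_support_iff.mp hμ (hh.coeff_eq_zero hne)
    rw [hS, Finset.mem_Iic]
    intro i
    calc μ i ≤ μ.degree := Finsupp.le_degree i μ
    _ = d := hdeg
    _ = D i := by simp [hD]
  -- Step 4: limit argument
  have key : Tendsto (fun k => eval (q (φ k)) (pderiv i (g (φ k)))) atTop
      (𝓝 (eval p (pderiv i f))) := by
    rw [eval_pderiv_eq_sum (hsupp f hhom) i p]
    have heq : ∀ k, eval (q (φ k)) (pderiv i (g (φ k))) =
        ∑ μ ∈ S, coeff μ (g (φ k)) * eval (q (φ k)) (pderiv i (monomial μ (1:ℂ))) :=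
      fun k => eval_pderiv_eq_sum (hsupp _ (hghom _)) i _
    simp_rw [heq]
    refine tendsto_finset_sum _ fun μ _ => Filter.Tendsto.mul ?_ ?_
    · exact (hlim μ).comp hφ.tendsto_atTop
    · exact ((pderiv i (monomial μ (1:ℂ))).continuous_eval.tendsto p).comp hconv
  have hzero : Tendsto (fun _ : ℕ => (0:ℂ)) atTop (𝓝 (eval p (pderiv i f))) := by
    have : (fun k => eval (q (φ k)) (pderiv i (g (φ k)))) = fun _ => (0:ℂ) := by
      funext k; exact hq2 (φ k) i
    rwa [this] at key
  exact tendsto_nhds_unique hzero tendsto_const_nhds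
end

section
/- The cubic surface f = x_4(x_2^2 − x_1x_3) + x_2^3 (the normal form with singularity type A_1 together with two A_2 singularities) cannot be written as a sum of five cubes of linear forms over ℂ; that is, its rank is at least 6. -/
open MvPolynomial

open Finset Matrix in
lemma minor_aux (v : Fin 5 → Fin 4 → ℂ)
    (hinj : ∀ w : Fin 4 → ℂ,
      (∀ j, v j 0 * w 0 + v j 1 * w 1 + v j 2 * w 2 + v j 3 * w 3 = 0) → w = 0)
    (u u' : Fin 5 → ℂ)
    (hu0 : ∑ j : Fin 5, u j * v j 0 = 0) (hu1 : ∑ j : Fin 5, u j * v j 1 = 0)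
    (hu2 : ∑ j : Fin 5, u j * v j 2 = 0) (hu3 : ∑ j : Fin 5, u j * v j 3 = 0)
    (hv0 : ∑ j : Fin 5, u' j * v j 0 = 0) (hv1 : ∑ j : Fin 5, u' j * v j 1 = 0)
    (hv2 : ∑ j : Fin 5, u' j * v j 2 = 0) (hv3 : ∑ j : Fin 5, u' j * v j 3 = 0) :
    ∀ j k, u j * u' k = u k * u' j := by
  have hu : ∀ i, ∑ j : Fin 5, u j * v j i = 0 := by
    intro i; fin_cases i <;> assumption
  have hu' : ∀ i, ∑ j : Fin 5, u' j * v j i = 0 := by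
    intro i; fin_cases i <;> assumption
  by_contra hcon
  push_neg at hcon
  obtain ⟨j0, k0, hne⟩ := hcon
  set M : Matrix (Fin 4) (Fin 5) ℂ := Matrix.of (fun i j => v j i) with hM
  have hker : LinearMap.ker (Mᵀ).mulVecLin = ⊥ := by
    rw [LinearMap.ker_eq_bot']
    intro w hw
    apply hinj
    intro j
    have := congrFun hw j
    simp only [Matrix.mulVecLin_apply, Matrix.mulVec, dotProduct, Matrix.transpose_apply,
      Matrix.of_apply, Fin.sum_univ_four, hM, Pi.zero_apply] at this
    linear_combination this
  have hrankT : Mᵀ.rank = 4 := by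
    have h1 := LinearMap.finrank_range_add_finrank_ker (Mᵀ).mulVecLin
    rw [hker, finrank_bot] at h1
    have h2 : Module.finrank ℂ (Fin 4 → ℂ) = 4 := by simp
    unfold Matrix.rank
    omega
  have hrank : M.rank = 4 := by rw [← Matrix.rank_transpose]; exact hrankT
  have hkerdim : Module.finrank ℂ (LinearMap.ker M.mulVecLin) = 1 := by
    have h1 := LinearMap.finrank_range_add_finrank_ker M.mulVecLin
    have h2 : Module.finrank ℂ (Fin 5 → ℂ) = 5 := by simp
    unfold Matrix.rank at hrank
    omega
  have humem : u ∈ LinearMap.ker M.mulVecLin := by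
    rw [LinearMap.mem_ker]
    funext i
    simp only [Matrix.mulVecLin_apply, Matrix.mulVec, dotProduct, hM,
      Matrix.of_apply, Pi.zero_apply]
    rw [Finset.sum_congr rfl (fun j _ => mul_comm (v j i) (u j))]
    exact hu i
  have humem' : u' ∈ LinearMap.ker M.mulVecLin := by
    rw [LinearMap.mem_ker]
    funext i
    simp only [Matrix.mulVecLin_apply, Matrix.mulVec, dotProduct, hM,
      Matrix.of_apply, Pi.zero_apply]
    rw [Finset.sum_congr rfl (fun j _ => mul_comm (v j i) (u' j))]
    exact hu' i
  have hli : LinearIndependent ℂ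
      ![(⟨u, humem⟩ : LinearMap.ker M.mulVecLin), ⟨u', humem'⟩] := by
    rw [LinearIndependent.pair_iff]
    intro s t hst
    have h0 : s * u j0 + t * u' j0 = 0 := by
      have := congrArg (fun z => (z : Fin 5 → ℂ) j0) (Subtype.ext_iff.mp hst)
      simpa using this
    have h1 : s * u k0 + t * u' k0 = 0 := by
      have := congrArg (fun z => (z : Fin 5 → ℂ) k0) (Subtype.ext_iff.mp hst)
      simpa using this
    have hm : u j0 * u' k0 - u k0 * u' j0 ≠ 0 := sub_ne_zero_of_ne hne
    constructor
    · have : s * (u j0 * u' k0 - u k0 * u' j0) = 0 := by linear_combination u' k0 * h0 - u' j0 * h1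
      exact (mul_eq_zero.mp this).resolve_right hm
    · have : t * (u j0 * u' k0 - u k0 * u' j0) = 0 := by linear_combination u j0 * h1 - u k0 * h0
      exact (mul_eq_zero.mp this).resolve_right hm
  have := hli.fintype_card_le_finrank
  simp [hkerdim] at this

set_option maxHeartbeats 4000000 in
open Finset in
theorem stmt15 :
    ¬ ∃ v : Fin 5 → Fin 4 → ℂ,
      (X 3 * (X 1 ^ 2 - X 0 * X 2) + X 1 ^ 3 : MvPolynomial (Fin 4) ℂ)
        = ∑ j, (linForm (v j)) ^ 3 := by
  rintro ⟨v, hv⟩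
  have H : ∀ x : Fin 4 → ℂ, x 3 * (x 1 ^ 2 - x 0 * x 2) + x 1 ^ 3
      = ∑ j : Fin 5, (∑ i : Fin 4, v j i * x i) ^ 3 := by
    intro x
    have h := congrArg (eval x) hv
    simpa [linForm, map_sum] using h
  have master : ∀ c0 c1 c2 c3 : ℂ, c3 * (c1 ^ 2 - c0 * c2) + c1 ^ 3 =
      (1*c0*c0*c0) * (∑ j : Fin 5, v j 0 * v j 0 * v j 0) + (3*c0*c0*c1) * (∑ j : Fin 5, v j 0 * v j 0 * v j 1) + (3*c0*c0*c2) * (∑ j : Fin 5, v j 0 * v j 0 * v j 2) + (3*c0*c0*c3) * (∑ j : Fin 5, v j 0 * v j 0 * v j 3) + (3*c0*c1*c1) * (∑ j : Fin 5, v j 0 * v j 1 * v j 1) + (6*c0*c1*c2) * (∑ j : Fin 5, v j 0 * v j 1 * v j 2) + (6*c0*c1*c3) * (∑ j : Fin 5, v j 0 * v j 1 * v j 3) + (3*c0*c2*c2) * (∑ j : Fin 5, v j 0 * v j 2 * v j 2) + (6*c0*c2*c3) * (∑ j : Fin 5, v j 0 * v j 2 * v j 3) + (3*c0*c3*c3)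 * (∑ j : Fin 5, v j 0 * v j 3 * v j 3) + (1*c1*c1*c1) * (∑ j : Fin 5, v j 1 * v j 1 * v j 1) + (3*c1*c1*c2) * (∑ j : Fin 5, v j 1 * v j 1 * v j 2) + (3*c1*c1*c3) * (∑ j : Fin 5, v j 1 * v j 1 * v j 3) + (3*c1*c2*c2) * (∑ j : Fin 5, v j 1 * v j 2 * v j 2) + (6*c1*c2*c3) * (∑ j : Fin 5, v j 1 * v j 2 * v j 3) + (3*c1*c3*c3) * (∑ j : Fin 5, v j 1 * v j 3 * v j 3) + (1*c2*c2*c2) * (∑ j : Fin 5, v j 2 * v j 2 * v j 2) + (3*c2*c2*c3) * (∑ j : Fin 5, v j 2 * v j 2 * v j 3) + (3*c2*c3*c3) * (∑ j : Fin 5, v j 2 * v j 3 * v j 3) + (1*c3*c3*c3) * (∑ j : Fin 5, v j 3 * v j 3 * v j 3) := by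
    intro c0 c1 c2 c3
    have h := H ![c0, c1, c2, c3]
    simp only [Fin.sum_univ_four, Matrix.cons_val_zero, Matrix.cons_val_one, Matrix.head_cons,
      Matrix.cons_val_two, Matrix.tail_cons, Matrix.cons_val_three] at h
    rw [h]
    rw [Finset.sum_congr rfl (fun j (_ : j ∈ Finset.univ) =>
      show (v j 0 * c0 + v j 1 * c1 + v j 2 * c2 + v j 3 * c3) ^ 3 = (1*c0*c0*c0) * (v j 0 * v j 0 * v j 0) + (3*c0*c0*c1) * (v j 0 * v j 0 * v j 1) + (3*c0*c0*c2) * (v j 0 * v j 0 * v j 2) + (3*c0*c0*c3) * (v j 0 * v j 0 * v j 3) + (3*c0*c1*c1) * (v j 0 * v j 1 * v j 1) + (6*c0*c1*c2) * (v j 0 * v j 1 * v j 2) + (6*c0*c1*c3) * (v j 0 * v j 1 * v j 3) + (3*c0*c2*c2) * (v j 0 * v j 2 * v j 2) + (6*c0*c2*c3) * (v j 0 * v j 2 * v j 3) + (3*c0*c3*c3) * (v j 0 * v j 3 * v j 3) + (1*c1*c1*c1) * (v j 1 * v j 1 * v j 1) + (3*c1*c1*c2) * (v j 1 * v j 1 *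 v j 2) + (3*c1*c1*c3) * (v j 1 * v j 1 * v j 3) + (3*c1*c2*c2) * (v j 1 * v j 2 * v j 2) + (6*c1*c2*c3) * (v j 1 * v j 2 * v j 3) + (3*c1*c3*c3) * (v j 1 * v j 3 * v j 3) + (1*c2*c2*c2) * (v j 2 * v j 2 * v j 2) + (3*c2*c2*c3) * (v j 2 * v j 2 * v j 3) + (3*c2*c3*c3) * (v j 2 * v j 3 * v j 3) + (1*c3*c3*c3) * (v j 3 * v j 3 * v j 3) from by ring)]
    simp only [Finset.sum_add_distrib, ← Finset.mul_sum]
  have m0 := master 1 0 0 0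
  have m1 := master 0 1 0 0
  have m2 := master 0 0 1 0
  have m3 := master 0 0 0 1
  have m4 := master 1 1 0 0
  have m5 := master 1 (-1) 0 0
  have m6 := master 1 0 1 0
  have m7 := master 1 0 (-1) 0
  have m8 := master 1 0 0 1
  have m9 := master 1 0 0 (-1)
  have m10 := master 0 1 1 0
  have m11 := master 0 1 (-1) 0
  have m12 := master 0 1 0 1
  have m13 := master 0 1 0 (-1)
  have m14 := master 0 0 1 1
  have m15 := master 0 0 1 (-1)
  have m16 := master 1 1 1 0
  have m17 := master 1 1 0 1
  have m18 := master 1 0 1 1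
  have m19 := master 0 1 1 1
  have s000 : ∑ j : Fin 5, v j 0 * v j 0 * v j 0 = (0 : ℂ) := by linear_combination (-1 : ℂ) * m0
  have s001 : ∑ j : Fin 5, v j 0 * v j 0 * v j 1 = (0 : ℂ) := by linear_combination (1/3 : ℂ) * m1 + (-1/6 : ℂ) * m4 + (1/6 : ℂ) * m5
  have s002 : ∑ j : Fin 5, v j 0 * v j 0 * v j 2 = (0 : ℂ) := by linear_combination (1/3 : ℂ) * m2 + (-1/6 : ℂ) * m6 + (1/6 : ℂ) * m7
  have s003 : ∑ j : Fin 5, v j 0 * v j 0 * v j 3 = (0 : ℂ) := by linear_combination (1/3 : ℂ) * m3 + (-1/6 : ℂ) * m8 + (1/6 : ℂ) * m9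
  have s011 : ∑ j : Fin 5, v j 0 * v j 1 * v j 1 = (0 : ℂ) := by linear_combination (1/3 : ℂ) * m0 + (-1/6 : ℂ) * m4 + (-1/6 : ℂ) * m5
  have s012 : ∑ j : Fin 5, v j 0 * v j 1 * v j 2 = (0 : ℂ) := by linear_combination (-1/6 : ℂ) * m0 + (-1/6 : ℂ) * m1 + (-1/6 : ℂ) * m2 + (1/6 : ℂ) * m4 + (1/6 : ℂ) * m6 + (1/6 : ℂ) * m10 + (-1/6 : ℂ) * m16
  have s013 : ∑ j : Fin 5, v j 0 * v j 1 * v j 3 = (0 : ℂ) := by linear_combination (-1/6 : ℂ) * m0 + (-1/6 : ℂ) * m1 + (-1/6 : ℂ) * m3 + (1/6 : ℂ) * m4 + (1/6 : ℂ) * m8 + (1/6 : ℂ) * m12 + (-1/6 : ℂ) * m17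
  have s022 : ∑ j : Fin 5, v j 0 * v j 2 * v j 2 = (0 : ℂ) := by linear_combination (1/3 : ℂ) * m0 + (-1/6 : ℂ) * m6 + (-1/6 : ℂ) * m7
  have s023 : ∑ j : Fin 5, v j 0 * v j 2 * v j 3 = (-1/6 : ℂ) := by linear_combination (-1/6 : ℂ) * m0 + (-1/6 : ℂ) * m2 + (-1/6 : ℂ) * m3 + (1/6 : ℂ) * m6 + (1/6 : ℂ) * m8 + (1/6 : ℂ) * m14 + (-1/6 : ℂ) * m18
  have s033 : ∑ j : Fin 5, v j 0 * v j 3 * v j 3 = (0 : ℂ) := by linear_combination (1/3 : ℂ) * m0 + (-1/6 : ℂ) * m8 + (-1/6 : ℂ) * m9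
  have s111 : ∑ j : Fin 5, v j 1 * v j 1 * v j 1 = (1 : ℂ) := by linear_combination (-1 : ℂ) * m1
  have s112 : ∑ j : Fin 5, v j 1 * v j 1 * v j 2 = (0 : ℂ) := by linear_combination (1/3 : ℂ) * m2 + (-1/6 : ℂ) * m10 + (1/6 : ℂ) * m11
  have s113 : ∑ j : Fin 5, v j 1 * v j 1 * v j 3 = (1/3 : ℂ) := by linear_combination (1/3 : ℂ) * m3 + (-1/6 : ℂ) * m12 + (1/6 : ℂ) * m13
  have s122 : ∑ j : Fin 5, v j 1 * v j 2 * v j 2 = (0 : ℂ) := by linear_combination (1/3 : ℂ) * m1 + (-1/6 : ℂ) * m10 + (-1/6 : ℂ) * m11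
  have s123 : ∑ j : Fin 5, v j 1 * v j 2 * v j 3 = (0 : ℂ) := by linear_combination (-1/6 : ℂ) * m1 + (-1/6 : ℂ) * m2 + (-1/6 : ℂ) * m3 + (1/6 : ℂ) * m10 + (1/6 : ℂ) * m12 + (1/6 : ℂ) * m14 + (-1/6 : ℂ) * m19
  have s133 : ∑ j : Fin 5, v j 1 * v j 3 * v j 3 = (0 : ℂ) := by linear_combination (1/3 : ℂ) * m1 + (-1/6 : ℂ) * m12 + (-1/6 : ℂ) * m13
  have s222 : ∑ j : Fin 5, v j 2 * v j 2 * v j 2 = (0 : ℂ) := by linear_combination (-1 : ℂ) * m2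
  have s223 : ∑ j : Fin 5, v j 2 * v j 2 * v j 3 = (0 : ℂ) := by linear_combination (1/3 : ℂ) * m3 + (-1/6 : ℂ) * m14 + (1/6 : ℂ) * m15
  have s233 : ∑ j : Fin 5, v j 2 * v j 3 * v j 3 = (0 : ℂ) := by linear_combination (1/3 : ℂ) * m2 + (-1/6 : ℂ) * m14 + (-1/6 : ℂ) * m15
  have s333 : ∑ j : Fin 5, v j 3 * v j 3 * v j 3 = (0 : ℂ) := by linear_combination (-1 : ℂ) * m3
  have hinj : ∀ w : Fin 4 → ℂ,
      (∀ j, v j 0 * w 0 + v j 1 * w 1 + v j 2 * w 2 + v j 3 * w 3 = 0) → w = 0 := by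
    intro w hw
    have hz23 : ∑ j : Fin 5, (v j 0 * w 0 + v j 1 * w 1 + v j 2 * w 2 + v j 3 * w 3) * (v j 2 * v j 3) = 0 :=
      Finset.sum_eq_zero fun j _ => by rw [hw j, zero_mul]
    have key23 : ∑ j : Fin 5, (v j 0 * w 0 + v j 1 * w 1 + v j 2 * w 2 + v j 3 * w 3) * (v j 2 * v j 3)
        = ∑ j : Fin 5, ((v j 0 * v j 2 * v j 3) * w 0 + ((v j 1 * v j 2 * v j 3) * w 1 + ((v j 2 * v j 2 * v j 3) * w 2 + (v j 2 * v j 3 * v j 3) * w 3))) := Finset.sum_congr rfl fun j _ => by ring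
    rw [key23, Finset.sum_add_distrib, Finset.sum_add_distrib, Finset.sum_add_distrib,
      ← Finset.sum_mul, ← Finset.sum_mul, ← Finset.sum_mul, ← Finset.sum_mul,
      s023, s123, s223, s233] at hz23
    have hw0 : w 0 = 0 := by linear_combination (-6 : ℂ) * hz23
    have hz13 : ∑ j : Fin 5, (v j 0 * w 0 + v j 1 * w 1 + v j 2 * w 2 + v j 3 * w 3) * (v j 1 * v j 3) = 0 :=
      Finset.sum_eq_zero fun j _ => by rw [hw j, zero_mul]
    have key13 : ∑ j : Fin 5, (v j 0 * w 0 + v j 1 * w 1 + v j 2 * w 2 + v j 3 * w 3) * (v j 1 * v j 3)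
        = ∑ j : Fin 5, ((v j 0 * v j 1 * v j 3) * w 0 + ((v j 1 * v j 1 * v j 3) * w 1 + ((v j 1 * v j 2 * v j 3) * w 2 + (v j 1 * v j 3 * v j 3) * w 3))) := Finset.sum_congr rfl fun j _ => by ring
    rw [key13, Finset.sum_add_distrib, Finset.sum_add_distrib, Finset.sum_add_distrib,
      ← Finset.sum_mul, ← Finset.sum_mul, ← Finset.sum_mul, ← Finset.sum_mul,
      s013, s113, s123, s133] at hz13
    have hw1 : w 1 = 0 := by linear_combination (3 : ℂ) * hz13
    have hz03 : ∑ j : Fin 5, (v j 0 * w 0 + v j 1 * w 1 + v j 2 * w 2 + v j 3 * w 3) * (v j 0 * v j 3) = 0 :=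
      Finset.sum_eq_zero fun j _ => by rw [hw j, zero_mul]
    have key03 : ∑ j : Fin 5, (v j 0 * w 0 + v j 1 * w 1 + v j 2 * w 2 + v j 3 * w 3) * (v j 0 * v j 3)
        = ∑ j : Fin 5, ((v j 0 * v j 0 * v j 3) * w 0 + ((v j 0 * v j 1 * v j 3) * w 1 + ((v j 0 * v j 2 * v j 3) * w 2 + (v j 0 * v j 3 * v j 3) * w 3))) := Finset.sum_congr rfl fun j _ => by ring
    rw [key03, Finset.sum_add_distrib, Finset.sum_add_distrib, Finset.sum_add_distrib,
      ← Finset.sum_mul, ← Finset.sum_mul, ← Finset.sum_mul, ← Finset.sum_mul,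
      s003, s013, s023, s033] at hz03
    have hw2 : w 2 = 0 := by linear_combination (-6 : ℂ) * hz03
    have hz11 : ∑ j : Fin 5, (v j 0 * w 0 + v j 1 * w 1 + v j 2 * w 2 + v j 3 * w 3) * (v j 1 * v j 1) = 0 :=
      Finset.sum_eq_zero fun j _ => by rw [hw j, zero_mul]
    have key11 : ∑ j : Fin 5, (v j 0 * w 0 + v j 1 * w 1 + v j 2 * w 2 + v j 3 * w 3) * (v j 1 * v j 1)
        = ∑ j : Fin 5, ((v j 0 * v j 1 * v j 1) * w 0 + ((v j 1 * v j 1 * v j 1) * w 1 + ((v j 1 * v j 1 * v j 2) * w 2 + (v j 1 * v j 1 * v j 3) * w 3))) := Finset.sum_congr rfl fun j _ => by ring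
    rw [key11, Finset.sum_add_distrib, Finset.sum_add_distrib, Finset.sum_add_distrib,
      ← Finset.sum_mul, ← Finset.sum_mul, ← Finset.sum_mul, ← Finset.sum_mul,
      s011, s111, s112, s113] at hz11
    have hw3 : w 3 = 0 := by linear_combination (3 : ℂ) * hz11 - (3 : ℂ) * hw1
    funext i; fin_cases i
    · simpa using hw0
    · simpa using hw1
    · simpa using hw2
    · simpa using hw3
  have hu00_0 : ∑ j : Fin 5, v j 0 * v j 0 * v j 0 = (0 : ℂ) := s000
  have hu00_1 : ∑ j : Fin 5, v j 0 * v j 0 * v j 1 = (0 : ℂ) := s001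
  have hu00_2 : ∑ j : Fin 5, v j 0 * v j 0 * v j 2 = (0 : ℂ) := s002
  have hu00_3 : ∑ j : Fin 5, v j 0 * v j 0 * v j 3 = (0 : ℂ) := s003
  have hu01_0 : ∑ j : Fin 5, v j 0 * v j 1 * v j 0 = (0 : ℂ) := by
    rw [Finset.sum_congr rfl (fun j (_ : j ∈ Finset.univ) =>
      show v j 0 * v j 1 * v j 0 = v j 0 * v j 0 * v j 1 from by ring)]
    exact s001
  have hu01_1 : ∑ j : Fin 5, v j 0 * v j 1 * v j 1 = (0 : ℂ) := s011
  have hu01_2 : ∑ j : Fin 5, v j 0 * v j 1 * v j 2 = (0 : ℂ) := s012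
  have hu01_3 : ∑ j : Fin 5, v j 0 * v j 1 * v j 3 = (0 : ℂ) := s013
  have hu12_0 : ∑ j : Fin 5, v j 1 * v j 2 * v j 0 = (0 : ℂ) := by
    rw [Finset.sum_congr rfl (fun j (_ : j ∈ Finset.univ) =>
      show v j 1 * v j 2 * v j 0 = v j 0 * v j 1 * v j 2 from by ring)]
    exact s012
  have hu12_1 : ∑ j : Fin 5, v j 1 * v j 2 * v j 1 = (0 : ℂ) := by
    rw [Finset.sum_congr rfl (fun j (_ : j ∈ Finset.univ) =>
      show v j 1 * v j 2 * v j 1 = v j 1 * v j 1 * v j 2 from by ring)]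
    exact s112
  have hu12_2 : ∑ j : Fin 5, v j 1 * v j 2 * v j 2 = (0 : ℂ) := s122
  have hu12_3 : ∑ j : Fin 5, v j 1 * v j 2 * v j 3 = (0 : ℂ) := s123
  have hu22_0 : ∑ j : Fin 5, v j 2 * v j 2 * v j 0 = (0 : ℂ) := by
    rw [Finset.sum_congr rfl (fun j (_ : j ∈ Finset.univ) =>
      show v j 2 * v j 2 * v j 0 = v j 0 * v j 2 * v j 2 from by ring)]
    exact s022
  have hu22_1 : ∑ j : Fin 5, v j 2 * v j 2 * v j 1 = (0 : ℂ) := by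
    rw [Finset.sum_congr rfl (fun j (_ : j ∈ Finset.univ) =>
      show v j 2 * v j 2 * v j 1 = v j 1 * v j 2 * v j 2 from by ring)]
    exact s122
  have hu22_2 : ∑ j : Fin 5, v j 2 * v j 2 * v j 2 = (0 : ℂ) := s222
  have hu22_3 : ∑ j : Fin 5, v j 2 * v j 2 * v j 3 = (0 : ℂ) := s223
  have hu33_0 : ∑ j : Fin 5, v j 3 * v j 3 * v j 0 = (0 : ℂ) := by
    rw [Finset.sum_congr rfl (fun j (_ : j ∈ Finset.univ) =>
      show v j 3 * v j 3 * v j 0 = v j 0 * v j 3 * v j 3 from by ring)]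
    exact s033
  have hu33_1 : ∑ j : Fin 5, v j 3 * v j 3 * v j 1 = (0 : ℂ) := by
    rw [Finset.sum_congr rfl (fun j (_ : j ∈ Finset.univ) =>
      show v j 3 * v j 3 * v j 1 = v j 1 * v j 3 * v j 3 from by ring)]
    exact s133
  have hu33_2 : ∑ j : Fin 5, v j 3 * v j 3 * v j 2 = (0 : ℂ) := by
    rw [Finset.sum_congr rfl (fun j (_ : j ∈ Finset.univ) =>
      show v j 3 * v j 3 * v j 2 = v j 2 * v j 3 * v j 3 from by ring)]
    exact s233
  have hu33_3 : ∑ j : Fin 5, v j 3 * v j 3 * v j 3 = (0 : ℂ) := s333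
  have hu6_0 : ∑ j : Fin 5, (v j 1 * v j 1 + 2 * (v j 0 * v j 2) - 3 * (v j 1 * v j 3)) * v j 0 = 0 := by
    rw [Finset.sum_congr rfl (fun j (_ : j ∈ Finset.univ) =>
      show (v j 1 * v j 1 + 2 * (v j 0 * v j 2) - 3 * (v j 1 * v j 3)) * v j 0
        = (v j 0 * v j 1 * v j 1) * 1 + ((v j 0 * v j 0 * v j 2) * 2 + (v j 0 * v j 1 * v j 3) * (-3)) from by ring)]
    rw [Finset.sum_add_distrib, Finset.sum_add_distrib, ← Finset.sum_mul, ← Finset.sum_mul,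
      ← Finset.sum_mul, s011, s002, s013]
    norm_num
  have hu6_1 : ∑ j : Fin 5, (v j 1 * v j 1 + 2 * (v j 0 * v j 2) - 3 * (v j 1 * v j 3)) * v j 1 = 0 := by
    rw [Finset.sum_congr rfl (fun j (_ : j ∈ Finset.univ) =>
      show (v j 1 * v j 1 + 2 * (v j 0 * v j 2) - 3 * (v j 1 * v j 3)) * v j 1
        = (v j 1 * v j 1 * v j 1) * 1 + ((v j 0 * v j 1 * v j 2) * 2 + (v j 1 * v j 1 * v j 3) * (-3)) from by ring)]
    rw [Finset.sum_add_distrib, Finset.sum_add_distrib, ← Finset.sum_mul, ← Finset.sum_mul,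
      ← Finset.sum_mul, s111, s012, s113]
    norm_num
  have hu6_2 : ∑ j : Fin 5, (v j 1 * v j 1 + 2 * (v j 0 * v j 2) - 3 * (v j 1 * v j 3)) * v j 2 = 0 := by
    rw [Finset.sum_congr rfl (fun j (_ : j ∈ Finset.univ) =>
      show (v j 1 * v j 1 + 2 * (v j 0 * v j 2) - 3 * (v j 1 * v j 3)) * v j 2
        = (v j 1 * v j 1 * v j 2) * 1 + ((v j 0 * v j 2 * v j 2) * 2 + (v j 1 * v j 2 * v j 3) * (-3)) from by ring)]
    rw [Finset.sum_add_distrib, Finset.sum_add_distrib, ← Finset.sum_mul, ← Finset.sum_mul,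
      ← Finset.sum_mul, s112, s022, s123]
    norm_num
  have hu6_3 : ∑ j : Fin 5, (v j 1 * v j 1 + 2 * (v j 0 * v j 2) - 3 * (v j 1 * v j 3)) * v j 3 = 0 := by
    rw [Finset.sum_congr rfl (fun j (_ : j ∈ Finset.univ) =>
      show (v j 1 * v j 1 + 2 * (v j 0 * v j 2) - 3 * (v j 1 * v j 3)) * v j 3
        = (v j 1 * v j 1 * v j 3) * 1 + ((v j 0 * v j 2 * v j 3) * 2 + (v j 1 * v j 3 * v j 3) * (-3)) from by ring)]
    rw [Finset.sum_add_distrib, Finset.sum_add_distrib, ← Finset.sum_mul, ← Finset.sum_mul,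
      ← Finset.sum_mul, s113, s023, s133]
    norm_num
  have m12 : ∀ j k : Fin 5, (v j 0 * v j 0) * (v k 0 * v k 1) = (v k 0 * v k 0) * (v j 0 * v j 1) :=
    minor_aux v hinj (fun j => v j 0 * v j 0) (fun j => v j 0 * v j 1) hu00_0 hu00_1 hu00_2 hu00_3 hu01_0 hu01_1 hu01_2 hu01_3
  have m15 : ∀ j k : Fin 5, (v j 0 * v j 0) * (v k 3 * v k 3) = (v k 0 * v k 0) * (v j 3 * v j 3) :=
    minor_aux v hinj (fun j => v j 0 * v j 0) (fun j => v j 3 * v j 3) hu00_0 hu00_1 hu00_2 hu00_3 hu33_0 hu33_1 hu33_2 hu33_3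
  have m16 : ∀ j k : Fin 5, (v j 0 * v j 0) * (v k 1 * v k 1 + 2 * (v k 0 * v k 2) - 3 * (v k 1 * v k 3)) = (v k 0 * v k 0) * (v j 1 * v j 1 + 2 * (v j 0 * v j 2) - 3 * (v j 1 * v j 3)) :=
    minor_aux v hinj (fun j => v j 0 * v j 0) (fun j => v j 1 * v j 1 + 2 * (v j 0 * v j 2) - 3 * (v j 1 * v j 3)) hu00_0 hu00_1 hu00_2 hu00_3 hu6_0 hu6_1 hu6_2 hu6_3
  have m23 : ∀ j k : Fin 5, (v j 0 * v j 1) * (v k 1 * v k 2) = (v k 0 * v k 1) * (v j 1 * v j 2) :=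
    minor_aux v hinj (fun j => v j 0 * v j 1) (fun j => v j 1 * v j 2) hu01_0 hu01_1 hu01_2 hu01_3 hu12_0 hu12_1 hu12_2 hu12_3
  have m24 : ∀ j k : Fin 5, (v j 0 * v j 1) * (v k 2 * v k 2) = (v k 0 * v k 1) * (v j 2 * v j 2) :=
    minor_aux v hinj (fun j => v j 0 * v j 1) (fun j => v j 2 * v j 2) hu01_0 hu01_1 hu01_2 hu01_3 hu22_0 hu22_1 hu22_2 hu22_3
  have m25 : ∀ j k : Fin 5, (v j 0 * v j 1) * (v k 3 * v k 3) = (v k 0 * v k 1) * (v j 3 * v j 3) :=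
    minor_aux v hinj (fun j => v j 0 * v j 1) (fun j => v j 3 * v j 3) hu01_0 hu01_1 hu01_2 hu01_3 hu33_0 hu33_1 hu33_2 hu33_3
  have m26 : ∀ j k : Fin 5, (v j 0 * v j 1) * (v k 1 * v k 1 + 2 * (v k 0 * v k 2) - 3 * (v k 1 * v k 3)) = (v k 0 * v k 1) * (v j 1 * v j 1 + 2 * (v j 0 * v j 2) - 3 * (v j 1 * v j 3)) :=
    minor_aux v hinj (fun j => v j 0 * v j 1) (fun j => v j 1 * v j 1 + 2 * (v j 0 * v j 2) - 3 * (v j 1 * v j 3)) hu01_0 hu01_1 hu01_2 hu01_3 hu6_0 hu6_1 hu6_2 hu6_3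
  by_cases hA : ∀ j : Fin 5, v j 0 = 0
  · rw [Finset.sum_eq_zero (fun j _ => by rw [hA j]; ring)] at s023
    norm_num at s023
  · push_neg at hA
    obtain ⟨i0, ha⟩ := hA
    by_cases hb : v i0 1 = 0
    · have ha2 : v i0 0 * v i0 0 ≠ 0 := mul_ne_zero ha ha
      have hball : ∀ j : Fin 5, v j 1 = 0 := by
        intro j
        by_contra hbj
        have h12 := m12 i0 j
        have h12' : v i0 0 * v i0 0 * (v j 0 * v j 1) = 0 := by rw [h12, hb]; ring
        have haj : v j 0 = 0 :=
          (mul_eq_zero.mp ((mul_eq_zero.mp h12').resolve_left ha2)).resolve_right hbj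
        have h15 := m15 i0 j
        have h15' : v i0 0 * v i0 0 * (v j 3 * v j 3) = 0 := by rw [h15, haj]; ring
        have hdj : v j 3 = 0 := mul_self_eq_zero.mp ((mul_eq_zero.mp h15').resolve_left ha2)
        have h16 := m16 i0 j
        have h16' : v i0 0 * v i0 0 * (v j 1 * v j 1 + 2 * (v j 0 * v j 2) - 3 * (v j 1 * v j 3)) = 0 := by
          rw [h16, haj]; ring
        have hz := (mul_eq_zero.mp h16').resolve_left ha2
        rw [haj, hdj] at hz
        simp at hz
        exact hbj hz
      rw [Finset.sum_eq_zero (fun j _ => by rw [hball j]; ring)] at s111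
      norm_num at s111
    · have hs : ∀ j : Fin 5, ∃ s : ℂ, v j 0 = s * v i0 0 ∧ v j 1 = s * v i0 1 ∧
          v j 2 = s * v i0 2 ∧ v j 3 = s * v i0 3 := by
        intro j
        have hab : v i0 0 * v i0 1 ≠ 0 := mul_ne_zero ha hb
        by_cases haj : v j 0 = 0
        · have h24 := m24 i0 j
          have h24' : v i0 0 * v i0 1 * (v j 2 * v j 2) = 0 := by rw [h24, haj]; ring
          have hcj : v j 2 = 0 := mul_self_eq_zero.mp ((mul_eq_zero.mp h24').resolve_left hab)
          have h25 := m25 i0 j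
          have h25' : v i0 0 * v i0 1 * (v j 3 * v j 3) = 0 := by rw [h25, haj]; ring
          have hdj : v j 3 = 0 := mul_self_eq_zero.mp ((mul_eq_zero.mp h25').resolve_left hab)
          have h26 := m26 i0 j
          have h26' : v i0 0 * v i0 1 * (v j 1 * v j 1 + 2 * (v j 0 * v j 2) - 3 * (v j 1 * v j 3)) = 0 := by
            rw [h26, haj]; ring
          have hz := (mul_eq_zero.mp h26').resolve_left hab
          rw [haj, hdj] at hz
          simp at hz
          exact ⟨0, by rw [haj]; ring, by rw [hz]; ring, by rw [hcj]; ring, by rw [hdj]; ring⟩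
        · have h12 := m12 j i0
          have key1 : (v i0 0 * v j 0) * (v j 1 * v i0 0 - v j 0 * v i0 1) = 0 := by
            linear_combination (-1 : ℂ) * h12
          have hb' : v j 1 * v i0 0 - v j 0 * v i0 1 = 0 :=
            (mul_eq_zero.mp key1).resolve_left (mul_ne_zero ha haj)
          have hbj : v j 1 ≠ 0 := by
            intro h
            have hz : v j 0 * v i0 1 = 0 := by linear_combination -hb' + v i0 0 * h
            rcases mul_eq_zero.mp hz with h' | h'
            exacts [haj h', hb h']
          have h23 := m23 j i0
          have key2 : (v i0 0 * v i0 1 * v j 1) * (v j 2 * v i0 0 - v j 0 * v i0 2) = 0 := by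
            linear_combination (-(v i0 0)) * h23
          have hc' : v j 2 * v i0 0 - v j 0 * v i0 2 = 0 :=
            (mul_eq_zero.mp key2).resolve_left (mul_ne_zero hab hbj)
          have h26 := m26 j i0
          have key3 : (3 * (v j 0 * (v i0 1 * v i0 1))) * (v j 3 * v i0 0 - v j 0 * v i0 3) = 0 := by
            linear_combination (v i0 0) * h26
              + (3 * (v i0 1 * v i0 3 * v j 0) - 2 * (v i0 0 * v i0 2 * v j 0)
                 - 3 * (v i0 0 * v i0 1 * v j 3) + v i0 0 * v i0 1 * v j 1) * hb'
              + (2 * (v i0 0 * v i0 1 * v j 0)) * hc'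
          have h3ne : (3 : ℂ) * (v j 0 * (v i0 1 * v i0 1)) ≠ 0 := by
            apply mul_ne_zero
            · norm_num
            · exact mul_ne_zero haj (mul_ne_zero hb hb)
          have hd' : v j 3 * v i0 0 - v j 0 * v i0 3 = 0 :=
            (mul_eq_zero.mp key3).resolve_left h3ne
          refine ⟨v j 0 / v i0 0, (div_mul_cancel₀ (v j 0) ha).symm, ?_, ?_, ?_⟩
          · rw [div_mul_eq_mul_div, eq_div_iff ha]; linear_combination hb'
          · rw [div_mul_eq_mul_div, eq_div_iff ha]; linear_combination hc'
          · rw [div_mul_eq_mul_div, eq_div_iff ha]; linear_combination hd'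
      choose s hs0 hs1 hs2 hs3 using hs
      have e1 : (∑ j : Fin 5, s j ^ 3) * (v i0 0 * v i0 2 * v i0 3) = (-1/6 : ℂ) := by
        rw [Finset.sum_mul, ← s023]
        exact Finset.sum_congr rfl fun j _ => by rw [hs0 j, hs2 j, hs3 j]; ring
      have e2 : (∑ j : Fin 5, s j ^ 3) * (v i0 0 * v i0 0 * v i0 2) = 0 := by
        rw [Finset.sum_mul, ← s002]
        exact Finset.sum_congr rfl fun j _ => by rw [hs0 j, hs2 j]; ring
      have hfin : v i0 0 * (-1/6 : ℂ) = 0 := by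
        linear_combination (-(v i0 0)) * e1 + (v i0 3) * e2
      rcases mul_eq_zero.mp hfin with h | h
      · exact ha h
      · norm_num at h
end

section
/- The cubic surface f = x_4x_1^2 + x_2^3 + x_3^3 + x_1x_2x_3 (the normal form D_4^I) cannot be written as a sum of five cubes of linear forms over ℂ; that is, its rank is at least 6. -/
set_option maxHeartbeats 1000000

open MvPolynomial

open Polynomial in
theorem cube_expand (p q r s : ℂ) :
    (Polynomial.C p * Polynomial.X + Polynomial.C q * Polynomial.X^4
      + Polynomial.C r * Polynomial.X^16 + Polynomial.C s * Polynomial.X^64 : Polynomial ℂ)^3 =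
    Polynomial.C (p^3) * Polynomial.X^3 + Polynomial.C (3*p^2*q) * Polynomial.X^6
    + Polynomial.C (3*p^2*r) * Polynomial.X^18 + Polynomial.C (3*p^2*s) * Polynomial.X^66
    + Polynomial.C (3*p*q^2) * Polynomial.X^9 + Polynomial.C (6*p*q*r) * Polynomial.X^21
    + Polynomial.C (6*p*q*s) * Polynomial.X^69 + Polynomial.C (3*p*r^2) * Polynomial.X^33
    + Polynomial.C (6*p*r*s) * Polynomial.X^81 + Polynomial.C (3*p*s^2) * Polynomial.X^129
    + Polynomial.C (q^3) * Polynomial.X^12 + Polynomial.C (3*q^2*r) * Polynomial.X^24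
    + Polynomial.C (3*q^2*s) * Polynomial.X^72 + Polynomial.C (3*q*r^2) * Polynomial.X^36
    + Polynomial.C (6*q*r*s) * Polynomial.X^84 + Polynomial.C (3*q*s^2) * Polynomial.X^132
    + Polynomial.C (r^3) * Polynomial.X^48 + Polynomial.C (3*r^2*s) * Polynomial.X^96
    + Polynomial.C (3*r*s^2) * Polynomial.X^144 + Polynomial.C (s^3) * Polynomial.X^192 := by
  simp only [map_mul, map_pow, map_ofNat]
  ring

theorem card3_S (s : Finset (Fin 5)) (a d : Fin 5 → ℂ)
    (hd : ∀ j ∈ s, d j ≠ 0)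
    (h1 : ∑ j ∈ s, (a j)^2 * d j = 1/3)
    (h2 : ∑ j ∈ s, a j * (d j)^2 = 0)
    (h3 : ∑ j ∈ s, (d j)^3 = 0) : 3 ≤ s.card := by
  by_contra hc
  push_neg at hc
  interval_cases h : s.card
  · rw [Finset.card_eq_zero] at h
    subst h; simp at h1
  · rw [Finset.card_eq_one] at h
    obtain ⟨x, rfl⟩ := h
    simp at h1 h2 h3
    exact hd x (by simp) h3
  · rw [Finset.card_eq_two] at h
    obtain ⟨x, y, hxy, rfl⟩ := h
    rw [Finset.sum_pair hxy] at h1 h2 h3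
    have hx := hd x (by simp)
    have key : (d x)^4 = 0 := by
      linear_combination (-3*(d x)^4)*h1 + (3*(d x)*(a x * (d x)^2 - a y * (d y)^2))*h2
        + (3*(a y)^2*(d y)*(d x))*h3
    exact hx (pow_eq_zero_iff (by norm_num)|>.mp key)

theorem card3_T (s : Finset (Fin 5)) (t w : Fin 5 → ℂ)
    (ht : ∀ j ∈ s, t j ≠ 0) (hw : ∀ j ∈ s, (w j)^3 = 1)
    (h1 : ∑ j ∈ s, t j = 1/216)
    (h2 : ∑ j ∈ s, t j * w j = 0)
    (h3 : ∑ j ∈ s, t j * (w j)^2 = 0) : 3 ≤ s.card := by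
  have wne : ∀ j ∈ s, w j ≠ 0 := by
    intro j hj he
    have := hw j hj
    rw [he] at this; norm_num at this
  by_contra hc
  push_neg at hc
  interval_cases h : s.card
  · rw [Finset.card_eq_zero] at h
    subst h; simp at h1
  · rw [Finset.card_eq_one] at h
    obtain ⟨x, rfl⟩ := h
    simp at h1 h2
    rcases h2 with h' | h'
    · exact ht x (by simp) h'
    · exact wne x (by simp) h'
  · rw [Finset.card_eq_two] at h
    obtain ⟨x, y, hxy, rfl⟩ := h
    rw [Finset.sum_pair hxy] at h1 h2 h3
    have hyx : w x = w y := by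
      have e : t y * w y * (w x - w y) = 0 := by linear_combination (w x) * h2 - h3
      rcases mul_eq_zero.mp e with h' | h'
      · rcases mul_eq_zero.mp h' with h'' | h''
        · exact absurd h'' (ht y (by simp))
        · exact absurd h'' (wne y (by simp))
      · exact sub_eq_zero.mp h'
    have e2 : w y * (1/216 : ℂ) = 0 := by
      rw [← h1]; linear_combination h2 - t x * hyx
    have : w y = 0 := by
      rcases mul_eq_zero.mp e2 with h' | h'
      · exact h'
      · norm_num at h'
    exact wne y (by simp) this

theorem main_contra (v : Fin 5 → Fin 4 → ℂ)
    (q3 : (0:ℂ) = v 0 0 ^ 3 + v 1 0 ^ 3 + v 2 0 ^ 3 + v 3 0 ^ 3 + v 4 0 ^ 3)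
    (q6 : (0:ℂ) = 3 * v 0 0 ^ 2 * v 0 1 + 3 * v 1 0 ^ 2 * v 1 1 + 3 * v 2 0 ^ 2 * v 2 1 + 3 * v 3 0 ^ 2 * v 3 1 + 3 * v 4 0 ^ 2 * v 4 1)
    (q9 : (0:ℂ) = 3 * v 0 0 * v 0 1 ^ 2 + 3 * v 1 0 * v 1 1 ^ 2 + 3 * v 2 0 * v 2 1 ^ 2 + 3 * v 3 0 * v 3 1 ^ 2 + 3 * v 4 0 * v 4 1 ^ 2)
    (q12 : (1:ℂ) = v 0 1 ^ 3 + v 1 1 ^ 3 + v 2 1 ^ 3 + v 3 1 ^ 3 + v 4 1 ^ 3)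
    (q18 : (0:ℂ) = 3 * v 0 0 ^ 2 * v 0 2 + 3 * v 1 0 ^ 2 * v 1 2 + 3 * v 2 0 ^ 2 * v 2 2 + 3 * v 3 0 ^ 2 * v 3 2 + 3 * v 4 0 ^ 2 * v 4 2)
    (q21 : (1:ℂ) = 6 * v 0 0 * v 0 1 * v 0 2 + 6 * v 1 0 * v 1 1 * v 1 2 + 6 * v 2 0 * v 2 1 * v 2 2 + 6 * v 3 0 * v 3 1 * v 3 2 + 6 * v 4 0 * v 4 1 * v 4 2)
    (q24 : (0:ℂ) = 3 * v 0 1 ^ 2 * v 0 2 + 3 * v 1 1 ^ 2 * v 1 2 + 3 * v 2 1 ^ 2 * v 2 2 + 3 * v 3 1 ^ 2 * v 3 2 + 3 * v 4 1 ^ 2 * v 4 2)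
    (q33 : (0:ℂ) = 3 * v 0 0 * v 0 2 ^ 2 + 3 * v 1 0 * v 1 2 ^ 2 + 3 * v 2 0 * v 2 2 ^ 2 + 3 * v 3 0 * v 3 2 ^ 2 + 3 * v 4 0 * v 4 2 ^ 2)
    (q36 : (0:ℂ) = 3 * v 0 1 * v 0 2 ^ 2 + 3 * v 1 1 * v 1 2 ^ 2 + 3 * v 2 1 * v 2 2 ^ 2 + 3 * v 3 1 * v 3 2 ^ 2 + 3 * v 4 1 * v 4 2 ^ 2)
    (q48 : (1:ℂ) = v 0 2 ^ 3 + v 1 2 ^ 3 + v 2 2 ^ 3 + v 3 2 ^ 3 + v 4 2 ^ 3)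
    (q66 : (1:ℂ) = 3 * v 0 0 ^ 2 * v 0 3 + 3 * v 1 0 ^ 2 * v 1 3 + 3 * v 2 0 ^ 2 * v 2 3 + 3 * v 3 0 ^ 2 * v 3 3 + 3 * v 4 0 ^ 2 * v 4 3)
    (q69 : (0:ℂ) = 6 * v 0 0 * v 0 1 * v 0 3 + 6 * v 1 0 * v 1 1 * v 1 3 + 6 * v 2 0 * v 2 1 * v 2 3 + 6 * v 3 0 * v 3 1 * v 3 3 + 6 * v 4 0 * v 4 1 * v 4 3)
    (q72 : (0:ℂ) = 3 * v 0 1 ^ 2 * v 0 3 + 3 * v 1 1 ^ 2 * v 1 3 + 3 * v 2 1 ^ 2 * v 2 3 + 3 * v 3 1 ^ 2 * v 3 3 + 3 * v 4 1 ^ 2 * v 4 3)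
    (q81 : (0:ℂ) = 6 * v 0 0 * v 0 2 * v 0 3 + 6 * v 1 0 * v 1 2 * v 1 3 + 6 * v 2 0 * v 2 2 * v 2 3 + 6 * v 3 0 * v 3 2 * v 3 3 + 6 * v 4 0 * v 4 2 * v 4 3)
    (q84 : (0:ℂ) = 6 * v 0 1 * v 0 2 * v 0 3 + 6 * v 1 1 * v 1 2 * v 1 3 + 6 * v 2 1 * v 2 2 * v 2 3 + 6 * v 3 1 * v 3 2 * v 3 3 + 6 * v 4 1 * v 4 2 * v 4 3)
    (q96 : (0:ℂ) = 3 * v 0 2 ^ 2 * v 0 3 + 3 * v 1 2 ^ 2 * v 1 3 + 3 * v 2 2 ^ 2 * v 2 3 + 3 * v 3 2 ^ 2 * v 3 3 + 3 * v 4 2 ^ 2 * v 4 3)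
    (q129 : (0:ℂ) = 3 * v 0 0 * v 0 3 ^ 2 + 3 * v 1 0 * v 1 3 ^ 2 + 3 * v 2 0 * v 2 3 ^ 2 + 3 * v 3 0 * v 3 3 ^ 2 + 3 * v 4 0 * v 4 3 ^ 2)
    (q132 : (0:ℂ) = 3 * v 0 1 * v 0 3 ^ 2 + 3 * v 1 1 * v 1 3 ^ 2 + 3 * v 2 1 * v 2 3 ^ 2 + 3 * v 3 1 * v 3 3 ^ 2 + 3 * v 4 1 * v 4 3 ^ 2)
    (q144 : (0:ℂ) = 3 * v 0 2 * v 0 3 ^ 2 + 3 * v 1 2 * v 1 3 ^ 2 + 3 * v 2 2 * v 2 3 ^ 2 + 3 * v 3 2 * v 3 3 ^ 2 + 3 * v 4 2 * v 4 3 ^ 2)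
    (q192 : (0:ℂ) = v 0 3 ^ 3 + v 1 3 ^ 3 + v 2 3 ^ 3 + v 3 3 ^ 3 + v 4 3 ^ 3)
    : False := by
  classical
  set N : Matrix (Fin 4) (Fin 5) ℂ := Matrix.of (fun i j => v j i) with hN
  -- rows of N are linearly independent
  have hind : LinearIndependent ℂ N := by
    apply Fintype.linearIndependent_iff.mpr
    intro g hg
    have hp : ∀ j : Fin 5, g 0 * v j 0 + g 1 * v j 1 + g 2 * v j 2 + g 3 * v j 3 = 0 := by
      intro j
      have h2 := congrFun hg j
      simp only [hN, Finset.sum_apply, Pi.smul_apply, Matrix.of_apply, smul_eq_mul,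
        Fin.sum_univ_four, Pi.zero_apply] at h2
      exact h2
    intro i
    fin_cases i
    · show g 0 = 0
      linear_combination (6*v 0 1*v 0 2)*(hp 0) + (6*v 1 1*v 1 2)*(hp 1) + (6*v 2 1*v 2 2)*(hp 2)
        + (6*v 3 1*v 3 2)*(hp 3) + (6*v 4 1*v 4 2)*(hp 4) + g 0*q21 + 2*(g 1)*q24 + 2*(g 2)*q36 + (g 3)*q84
    · show g 1 = 0
      linear_combination (v 0 1^2)*(hp 0) + (v 1 1^2)*(hp 1) + (v 2 1^2)*(hp 2)
        + (v 3 1^2)*(hp 3) + (v 4 1^2)*(hp 4) + (g 0/3)*q9 + (g 1)*q12 + (g 2/3)*q24 + (g 3/3)*q72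
    · show g 2 = 0
      linear_combination (v 0 2^2)*(hp 0) + (v 1 2^2)*(hp 1) + (v 2 2^2)*(hp 2)
        + (v 3 2^2)*(hp 3) + (v 4 2^2)*(hp 4) + (g 0/3)*q33 + (g 1/3)*q36 + (g 2)*q48 + (g 3/3)*q96
    · show g 3 = 0
      linear_combination (3*v 0 0^2)*(hp 0) + (3*v 1 0^2)*(hp 1) + (3*v 2 0^2)*(hp 2)
        + (3*v 3 0^2)*(hp 3) + (3*v 4 0^2)*(hp 4) + (3*(g 0))*q3 + (g 1)*q6 + (g 2)*q18 + (g 3)*q66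
  have hrank4 : N.rank = 4 := by
    have h2 := hind.rank_matrix
    simpa using h2
  have hker1 : Module.finrank ℂ ↥(LinearMap.ker N.mulVecLin) = 1 := by
    have h1 := LinearMap.finrank_range_add_finrank_ker N.mulVecLin
    have h2 : Module.finrank ℂ (Fin 5 → ℂ) = 5 := by simp
    have h3 : Module.finrank ℂ ↥(LinearMap.range N.mulVecLin) = 4 := hrank4
    omega
  -- kernel vectors
  have hmemiff : ∀ w : Fin 5 → ℂ, (∀ i : Fin 4, v 0 i * w 0 + v 1 i * w 1 + v 2 i * w 2
      + v 3 i * w 3 + v 4 i * w 4 = 0) → w ∈ LinearMap.ker N.mulVecLin := by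
    intro w hw
    rw [LinearMap.mem_ker]
    funext i
    have := hw i
    simp only [Matrix.mulVecLin_apply, Matrix.mulVec, dotProduct, hN, Matrix.of_apply,
      Fin.sum_univ_five, Pi.zero_apply]
    linear_combination this
  set zv : Fin 5 → ℂ := fun j => v j 3 * v j 3 with hzv
  have hzmem : zv ∈ LinearMap.ker N.mulVecLin := by
    apply hmemiff
    intro i
    fin_cases i
    · show v 0 0 * (v 0 3 * v 0 3) + v 1 0 * (v 1 3 * v 1 3) + v 2 0 * (v 2 3 * v 2 3)
        + v 3 0 * (v 3 3 * v 3 3) + v 4 0 * (v 4 3 * v 4 3) = 0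
      linear_combination (-1/3)*q129
    · show v 0 1 * (v 0 3 * v 0 3) + v 1 1 * (v 1 3 * v 1 3) + v 2 1 * (v 2 3 * v 2 3)
        + v 3 1 * (v 3 3 * v 3 3) + v 4 1 * (v 4 3 * v 4 3) = 0
      linear_combination (-1/3)*q132
    · show v 0 2 * (v 0 3 * v 0 3) + v 1 2 * (v 1 3 * v 1 3) + v 2 2 * (v 2 3 * v 2 3)
        + v 3 2 * (v 3 3 * v 3 3) + v 4 2 * (v 4 3 * v 4 3) = 0
      linear_combination (-1/3)*q144
    · show v 0 3 * (v 0 3 * v 0 3) + v 1 3 * (v 1 3 * v 1 3) + v 2 3 * (v 2 3 * v 2 3)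
        + v 3 3 * (v 3 3 * v 3 3) + v 4 3 * (v 4 3 * v 4 3) = 0
      linear_combination (-1)*q192
  set w1v : Fin 5 → ℂ := fun j => v j 3 * v j 1 with hw1v
  have hw1vmem : w1v ∈ LinearMap.ker N.mulVecLin := by
    apply hmemiff
    intro i
    fin_cases i
    · show v 0 0 * (v 0 3 * v 0 1) + v 1 0 * (v 1 3 * v 1 1) + v 2 0 * (v 2 3 * v 2 1) + v 3 0 * (v 3 3 * v 3 1) + v 4 0 * (v 4 3 * v 4 1) = 0
      linear_combination (-1/6)*q69
    · show v 0 1 * (v 0 3 * v 0 1) + v 1 1 * (v 1 3 * v 1 1) + v 2 1 * (v 2 3 * v 2 1) + v 3 1 * (v 3 3 * v 3 1) + v 4 1 * (v 4 3 * v 4 1) = 0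
      linear_combination (-1/3)*q72
    · show v 0 2 * (v 0 3 * v 0 1) + v 1 2 * (v 1 3 * v 1 1) + v 2 2 * (v 2 3 * v 2 1) + v 3 2 * (v 3 3 * v 3 1) + v 4 2 * (v 4 3 * v 4 1) = 0
      linear_combination (-1/6)*q84
    · show v 0 3 * (v 0 3 * v 0 1) + v 1 3 * (v 1 3 * v 1 1) + v 2 3 * (v 2 3 * v 2 1) + v 3 3 * (v 3 3 * v 3 1) + v 4 3 * (v 4 3 * v 4 1) = 0
      linear_combination (-1/3)*q132
  set w2v : Fin 5 → ℂ := fun j => v j 3 * v j 2 with hw2v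
  have hw2vmem : w2v ∈ LinearMap.ker N.mulVecLin := by
    apply hmemiff
    intro i
    fin_cases i
    · show v 0 0 * (v 0 3 * v 0 2) + v 1 0 * (v 1 3 * v 1 2) + v 2 0 * (v 2 3 * v 2 2) + v 3 0 * (v 3 3 * v 3 2) + v 4 0 * (v 4 3 * v 4 2) = 0
      linear_combination (-1/6)*q81
    · show v 0 1 * (v 0 3 * v 0 2) + v 1 1 * (v 1 3 * v 1 2) + v 2 1 * (v 2 3 * v 2 2) + v 3 1 * (v 3 3 * v 3 2) + v 4 1 * (v 4 3 * v 4 2) = 0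
      linear_combination (-1/6)*q84
    · show v 0 2 * (v 0 3 * v 0 2) + v 1 2 * (v 1 3 * v 1 2) + v 2 2 * (v 2 3 * v 2 2) + v 3 2 * (v 3 3 * v 3 2) + v 4 2 * (v 4 3 * v 4 2) = 0
      linear_combination (-1/3)*q96
    · show v 0 3 * (v 0 3 * v 0 2) + v 1 3 * (v 1 3 * v 1 2) + v 2 3 * (v 2 3 * v 2 2) + v 3 3 * (v 3 3 * v 3 2) + v 4 3 * (v 4 3 * v 4 2) = 0
      linear_combination (-1/3)*q144
  set w3v : Fin 5 → ℂ := fun j => 6 * v j 0 * v j 1 - v j 2 * v j 2 with hw3v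
  have hw3vmem : w3v ∈ LinearMap.ker N.mulVecLin := by
    apply hmemiff
    intro i
    fin_cases i
    · show v 0 0 * (6 * v 0 0 * v 0 1 - v 0 2 * v 0 2) + v 1 0 * (6 * v 1 0 * v 1 1 - v 1 2 * v 1 2) + v 2 0 * (6 * v 2 0 * v 2 1 - v 2 2 * v 2 2) + v 3 0 * (6 * v 3 0 * v 3 1 - v 3 2 * v 3 2) + v 4 0 * (6 * v 4 0 * v 4 1 - v 4 2 * v 4 2) = 0
      linear_combination (-2)*q6 + (1/3)*q33
    · show v 0 1 * (6 * v 0 0 * v 0 1 - v 0 2 * v 0 2) + v 1 1 * (6 * v 1 0 * v 1 1 - v 1 2 * v 1 2) + v 2 1 * (6 * v 2 0 * v 2 1 - v 2 2 * v 2 2) + v 3 1 * (6 * v 3 0 * v 3 1 - v 3 2 * v 3 2) + v 4 1 * (6 * v 4 0 * v 4 1 - v 4 2 * v 4 2) = 0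
      linear_combination (-2)*q9 + (1/3)*q36
    · show v 0 2 * (6 * v 0 0 * v 0 1 - v 0 2 * v 0 2) + v 1 2 * (6 * v 1 0 * v 1 1 - v 1 2 * v 1 2) + v 2 2 * (6 * v 2 0 * v 2 1 - v 2 2 * v 2 2) + v 3 2 * (6 * v 3 0 * v 3 1 - v 3 2 * v 3 2) + v 4 2 * (6 * v 4 0 * v 4 1 - v 4 2 * v 4 2) = 0
      linear_combination (-1)*q21 + (1)*q48
    · show v 0 3 * (6 * v 0 0 * v 0 1 - v 0 2 * v 0 2) + v 1 3 * (6 * v 1 0 * v 1 1 - v 1 2 * v 1 2) + v 2 3 * (6 * v 2 0 * v 2 1 - v 2 2 * v 2 2) + v 3 3 * (6 * v 3 0 * v 3 1 - v 3 2 * v 3 2) + v 4 3 * (6 * v 4 0 * v 4 1 - v 4 2 * v 4 2) = 0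
      linear_combination (-1)*q69 + (1/3)*q96
  set w4v : Fin 5 → ℂ := fun j => 6 * v j 0 * v j 2 - v j 1 * v j 1 with hw4v
  have hw4vmem : w4v ∈ LinearMap.ker N.mulVecLin := by
    apply hmemiff
    intro i
    fin_cases i
    · show v 0 0 * (6 * v 0 0 * v 0 2 - v 0 1 * v 0 1) + v 1 0 * (6 * v 1 0 * v 1 2 - v 1 1 * v 1 1) + v 2 0 * (6 * v 2 0 * v 2 2 - v 2 1 * v 2 1) + v 3 0 * (6 * v 3 0 * v 3 2 - v 3 1 * v 3 1) + v 4 0 * (6 * v 4 0 * v 4 2 - v 4 1 * v 4 1) = 0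
      linear_combination (-2)*q18 + (1/3)*q9
    · show v 0 1 * (6 * v 0 0 * v 0 2 - v 0 1 * v 0 1) + v 1 1 * (6 * v 1 0 * v 1 2 - v 1 1 * v 1 1) + v 2 1 * (6 * v 2 0 * v 2 2 - v 2 1 * v 2 1) + v 3 1 * (6 * v 3 0 * v 3 2 - v 3 1 * v 3 1) + v 4 1 * (6 * v 4 0 * v 4 2 - v 4 1 * v 4 1) = 0
      linear_combination (-1)*q21 + (1)*q12
    · show v 0 2 * (6 * v 0 0 * v 0 2 - v 0 1 * v 0 1) + v 1 2 * (6 * v 1 0 * v 1 2 - v 1 1 * v 1 1) + v 2 2 * (6 * v 2 0 * v 2 2 - v 2 1 * v 2 1) + v 3 2 * (6 * v 3 0 * v 3 2 - v 3 1 * v 3 1) + v 4 2 * (6 * v 4 0 * v 4 2 - v 4 1 * v 4 1) = 0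
      linear_combination (-2)*q33 + (1/3)*q24
    · show v 0 3 * (6 * v 0 0 * v 0 2 - v 0 1 * v 0 1) + v 1 3 * (6 * v 1 0 * v 1 2 - v 1 1 * v 1 1) + v 2 3 * (6 * v 2 0 * v 2 2 - v 2 1 * v 2 1) + v 3 3 * (6 * v 3 0 * v 3 2 - v 3 1 * v 3 1) + v 4 3 * (6 * v 4 0 * v 4 2 - v 4 1 * v 4 1) = 0
      linear_combination (-1)*q81 + (1/3)*q72
  have hzne : zv ≠ 0 := by
    intro h0
    have hd : ∀ j, v j 3 = 0 := by
      intro j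
      have h1 := congrFun h0 j
      simp only [hzv, Pi.zero_apply, mul_self_eq_zero] at h1
      exact h1
    rw [hd 0, hd 1, hd 2, hd 3, hd 4] at q66
    simp at q66
  have hprop : ∀ w : Fin 5 → ℂ, w ∈ LinearMap.ker N.mulVecLin → ∃ lam : ℂ, ∀ j, lam * zv j = w j := by
    have hzK : (⟨zv, hzmem⟩ : LinearMap.ker N.mulVecLin) ≠ 0 := by
      intro h0
      rw [Submodule.mk_eq_zero] at h0
      exact hzne h0
    intro w hw
    obtain ⟨lam, hlam⟩ := (finrank_eq_one_iff_of_nonzero' _ hzK).mp hker1 ⟨w, hw⟩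
    refine ⟨lam, fun j => ?_⟩
    have h1 := congrFun (congrArg Subtype.val hlam) j
    simpa using h1
  obtain ⟨lam, hlam⟩ := hprop w1v hw1vmem
  obtain ⟨mu, hmu⟩ := hprop w2v hw2vmem
  obtain ⟨nu, hnu⟩ := hprop w3v hw3vmem
  obtain ⟨rho, hrho⟩ := hprop w4v hw4vmem
  simp only [hzv, hw1v, hw2v, hw3v, hw4v] at hlam hmu hnu hrho
  have hbP : ∀ j, v j 3 ≠ 0 → v j 1 = lam * v j 3 := by
    intro j hj
    have h2 : v j 3 * v j 1 = v j 3 * (lam * v j 3) := by linear_combination - hlam j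
    exact mul_left_cancel₀ hj h2
  have hcP : ∀ j, v j 3 ≠ 0 → v j 2 = mu * v j 3 := by
    intro j hj
    have h2 : v j 3 * v j 2 = v j 3 * (mu * v j 3) := by linear_combination - hmu j
    exact mul_left_cancel₀ hj h2
  have hQc : ∀ j, v j 3 = 0 → 6 * v j 0 * v j 1 = v j 2 * v j 2 := by
    intro j hj
    have h1 := hnu j
    rw [hj] at h1
    linear_combination - h1
  have hQb : ∀ j, v j 3 = 0 → 6 * v j 0 * v j 2 = v j 1 * v j 1 := by
    intro j hj
    have h1 := hrho j
    rw [hj] at h1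
    linear_combination - h1
  have hQb0 : ∀ j, v j 3 = 0 → (v j 0 = 0 ∨ v j 1 = 0) → v j 1 = 0 := by
    intro j hj hcase
    rcases hcase with h0 | h0
    · have h2 := hQb j hj
      rw [h0] at h2
      have h3 : v j 1 * v j 1 = 0 := by linear_combination - h2
      exact mul_self_eq_zero.mp h3
    · exact h0
  -- the set P of indices with nonzero last coordinate
  set P : Finset (Fin 5) := Finset.univ.filter (fun j => ¬ v j 3 = 0) with hP
  have hPsub : ∀ f : Fin 5 → ℂ, (∀ x, v x 3 = 0 → f x = 0) → ∑ j ∈ P, f j = ∑ j : Fin 5, f j := by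
    intro f hf
    rw [hP]
    apply Finset.sum_filter_of_ne
    intro x _ hfx h0
    exact hfx (hf x h0)
  have hPa2d : ∑ j ∈ P, (v j 0)^2 * v j 3 = 1/3 := by
    rw [hPsub _ (by intro x h0; rw [h0]; ring)]
    rw [Fin.sum_univ_five]
    linear_combination (-1/3)*q66
  have hPad2 : ∑ j ∈ P, v j 0 * (v j 3)^2 = 0 := by
    rw [hPsub _ (by intro x h0; rw [h0]; ring)]
    rw [Fin.sum_univ_five]
    linear_combination (-1/3)*q129
  have hPd3 : ∑ j ∈ P, (v j 3)^3 = 0 := by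
    rw [hPsub _ (by intro x h0; rw [h0]; ring)]
    rw [Fin.sum_univ_five]
    linear_combination (-1)*q192
  have hP3 : 3 ≤ P.card := by
    apply card3_S P (fun j => v j 0) (fun j => v j 3) ?_ hPa2d hPad2 hPd3
    intro j hj
    exact (Finset.mem_filter.mp hj).2
  -- sums over P of the b-monomials vanish
  have hPb3 : ∑ j ∈ P, (v j 1)^3 = 0 := by
    have e1 : ∑ j ∈ P, (v j 1)^3 = ∑ j ∈ P, lam^3 * (v j 3)^3 := by
      refine Finset.sum_congr rfl (fun j hj => ?_)
      rw [hbP j (Finset.mem_filter.mp hj).2]; ring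
    rw [e1, ← Finset.mul_sum, hPd3, mul_zero]
  have hPb2c : ∑ j ∈ P, (v j 1)^2 * v j 2 = 0 := by
    have e1 : ∑ j ∈ P, (v j 1)^2 * v j 2 = ∑ j ∈ P, (lam^2*mu) * (v j 3)^3 := by
      refine Finset.sum_congr rfl (fun j hj => ?_)
      rw [hbP j (Finset.mem_filter.mp hj).2, hcP j (Finset.mem_filter.mp hj).2]; ring
    rw [e1, ← Finset.mul_sum, hPd3, mul_zero]
  have hPbc2 : ∑ j ∈ P, v j 1 * (v j 2)^2 = 0 := by
    have e1 : ∑ j ∈ P, v j 1 * (v j 2)^2 = ∑ j ∈ P, (lam*mu^2) * (v j 3)^3 := by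
      refine Finset.sum_congr rfl (fun j hj => ?_)
      rw [hbP j (Finset.mem_filter.mp hj).2, hcP j (Finset.mem_filter.mp hj).2]; ring
    rw [e1, ← Finset.mul_sum, hPd3, mul_zero]
  -- the set Q2
  set Q2 : Finset (Fin 5) := Finset.univ.filter
      (fun j => v j 3 = 0 ∧ ¬ v j 0 = 0 ∧ ¬ v j 1 = 0) with hQ2
  have hkey : ∀ f : Fin 5 → ℂ, (∀ x, v x 1 = 0 → f x = 0) →
      ∑ j ∈ Q2, f j = ∑ j ∈ Finset.univ.filter (fun j => v j 3 = 0), f j := by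
    intro f hf
    rw [hQ2]
    apply Finset.sum_subset
    · intro x hx
      simp only [Finset.mem_filter] at hx ⊢
      exact ⟨hx.1, hx.2.1⟩
    · intro x hx hnx
      simp only [Finset.mem_filter, Finset.mem_univ, true_and] at hx hnx
      have hd0 : v x 3 = 0 := hx
      have hab : v x 0 = 0 ∨ v x 1 = 0 := by
        by_contra hno
        push_neg at hno
        exact hnx ⟨hd0, hno.1, hno.2⟩
      exact hf x (hQb0 x hd0 hab)
  have hsplit : ∀ f : Fin 5 → ℂ,
      ∑ j ∈ Finset.univ.filter (fun j => v j 3 = 0), f j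
        + ∑ j ∈ P, f j = ∑ j : Fin 5, f j := by
    intro f
    rw [hP]
    exact Finset.sum_filter_add_sum_filter_not Finset.univ _ f
  have hQ2b3 : ∑ j ∈ Q2, (v j 1)^3 = 1 := by
    rw [hkey _ (by intro x h0; rw [h0]; ring)]
    have h1 := hsplit (fun j => (v j 1)^3)
    rw [hPb3, add_zero] at h1
    rw [h1, Fin.sum_univ_five]
    linear_combination - q12
  have hQ2b2c : ∑ j ∈ Q2, (v j 1)^2 * v j 2 = 0 := by
    rw [hkey _ (by intro x h0; rw [h0]; ring)]
    have h1 := hsplit (fun j => (v j 1)^2 * v j 2)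
    rw [hPb2c, add_zero] at h1
    rw [h1, Fin.sum_univ_five]
    linear_combination (-1/3) * q24
  have hQ2bc2 : ∑ j ∈ Q2, v j 1 * (v j 2)^2 = 0 := by
    rw [hkey _ (by intro x h0; rw [h0]; ring)]
    have h1 := hsplit (fun j => v j 1 * (v j 2)^2)
    rw [hPbc2, add_zero] at h1
    rw [h1, Fin.sum_univ_five]
    linear_combination (-1/3) * q36
  -- pointwise structure on Q2
  have hQ2mem : ∀ j ∈ Q2, v j 3 = 0 ∧ v j 0 ≠ 0 ∧ v j 1 ≠ 0 := by
    intro j hj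
    rw [hQ2] at hj
    simpa using (Finset.mem_filter.mp hj).2
  have hpoint : ∀ j ∈ Q2,
      (v j 1)^3 = 216 * (v j 0)^3
      ∧ (v j 1)^2 * v j 2 = 216 * (v j 0)^3 * (v j 1 / (6 * v j 0))
      ∧ v j 1 * (v j 2)^2 = 216 * (v j 0)^3 * (v j 1 / (6 * v j 0))^2
      ∧ (v j 1 / (6 * v j 0))^3 = 1 := by
    intro j hj
    obtain ⟨hd0, ha, hb⟩ := hQ2mem j hj
    have h1 := hQc j hd0
    have h2 := hQb j hd0
    have hb4 : (v j 1)^4 = 216 * (v j 0)^3 * (v j 1) := by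
      linear_combination (-((v j 1)^2 + 6 * v j 0 * v j 2))*h2 + (-36*(v j 0)^2)*h1
    have hb3 : (v j 1)^3 = 216 * (v j 0)^3 := by
      apply mul_right_cancel₀ hb
      linear_combination hb4
    refine ⟨hb3, ?_, ?_, ?_⟩
    · field_simp
      linear_combination 6 * (mul_left_cancel₀ hb (show v j 1 * (v j 1 * v j 2) = v j 1 * (36 * (v j 0)^2) by
        linear_combination (-(v j 2)) * h2 + (-6 * v j 0) * h1))
    · field_simp
      linear_combination (-36) * h1
    · field_simp
      linear_combination hb3
  -- sums over Q2 in terms of t and w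
  have hQ2t : ∑ j ∈ Q2, (v j 0)^3 = 1/216 := by
    have s1 : ∑ j ∈ Q2, (216:ℂ) * (v j 0)^3 = 1 := by
      rw [← hQ2b3]
      refine Finset.sum_congr rfl (fun j hj => ?_)
      exact ((hpoint j hj).1).symm
    rw [← Finset.mul_sum] at s1
    linear_combination (1/216) * s1
  have hQ2tw : ∑ j ∈ Q2, (v j 0)^3 * (v j 1 / (6 * v j 0)) = 0 := by
    have s1 : ∑ j ∈ Q2, (216:ℂ) * ((v j 0)^3 * (v j 1 / (6 * v j 0))) = 0 := by
      rw [← hQ2b2c]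
      refine Finset.sum_congr rfl (fun j hj => ?_)
      have := (hpoint j hj).2.1
      linear_combination - this
    rw [← Finset.mul_sum] at s1
    linear_combination (1/216) * s1
  have hQ2tw2 : ∑ j ∈ Q2, (v j 0)^3 * (v j 1 / (6 * v j 0))^2 = 0 := by
    have s1 : ∑ j ∈ Q2, (216:ℂ) * ((v j 0)^3 * (v j 1 / (6 * v j 0))^2) = 0 := by
      rw [← hQ2bc2]
      refine Finset.sum_congr rfl (fun j hj => ?_)
      have := (hpoint j hj).2.2.1
      linear_combination - this
    rw [← Finset.mul_sum] at s1
    linear_combination (1/216) * s1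
  have hQ23 : 3 ≤ Q2.card := by
    apply card3_T Q2 (fun j => (v j 0)^3) (fun j => v j 1 / (6 * v j 0)) ?_ ?_ hQ2t hQ2tw hQ2tw2
    · intro j hj
      exact pow_ne_zero 3 (hQ2mem j hj).2.1
    · intro j hj
      exact (hpoint j hj).2.2.2
  -- conclude
  have hdisj : Disjoint P Q2 := by
    rw [Finset.disjoint_left]
    intro x hxP hxQ
    rw [hP] at hxP
    rw [hQ2] at hxQ
    exact (Finset.mem_filter.mp hxP).2 (Finset.mem_filter.mp hxQ).2.1
  have hcard := Finset.card_union_of_disjoint hdisj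
  have hle : (P ∪ Q2).card ≤ 5 := by
    have h1 := Finset.card_le_univ (P ∪ Q2)
    simpa using h1
  omega

theorem stmt16 :
    ¬ ∃ v : Fin 5 → Fin 4 → ℂ,
      (X 3 * X 0 ^ 2 + X 1 ^ 3 + X 2 ^ 3 + X 0 * X 1 * X 2 : MvPolynomial (Fin 4) ℂ)
        = ∑ j, (linForm (v j)) ^ 3 := by
  classical
  rintro ⟨v, h⟩
  -- Step 1: transport to a univariate polynomial identity
  have H := congrArg (aeval (fun i : Fin 4 => (Polynomial.X : Polynomial ℂ) ^ (4 ^ (i : ℕ)))) h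
  simp only [map_add, map_mul, map_pow, map_sum, aeval_X, linForm, aeval_C] at H
  rw [Fin.sum_univ_five] at H
  simp only [Fin.sum_univ_four, show ((3:Fin 4):ℕ) = 3 from rfl, show ((2:Fin 4):ℕ) = 2 from rfl,
    show ((1:Fin 4):ℕ) = 1 from rfl, show ((0:Fin 4):ℕ) = 0 from rfl] at H
  norm_num at H
  rw [show (Polynomial.X:Polynomial ℂ)^(64:ℕ) * Polynomial.X^2 + (Polynomial.X^(4:ℕ))^(3:ℕ)
      + (Polynomial.X^(16:ℕ))^(3:ℕ) + Polynomial.X * Polynomial.X^(4:ℕ) * Polynomial.X^(16:ℕ)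
      = Polynomial.X^(66:ℕ) + Polynomial.X^(12:ℕ) + Polynomial.X^(48:ℕ) + Polynomial.X^(21:ℕ)
      from by ring] at H
  simp only [cube_expand] at H
  -- Step 2: extract the 20 coefficient equations
  have q3 := congrArg (fun P => Polynomial.coeff P 3) H
  have q6 := congrArg (fun P => Polynomial.coeff P 6) H
  have q9 := congrArg (fun P => Polynomial.coeff P 9) H
  have q12 := congrArg (fun P => Polynomial.coeff P 12) H
  have q18 := congrArg (fun P => Polynomial.coeff P 18) H
  have q21 := congrArg (fun P => Polynomial.coeff P 21) H
  have q24 := congrArg (fun P => Polynomial.coeff P 24) H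
  have q33 := congrArg (fun P => Polynomial.coeff P 33) H
  have q36 := congrArg (fun P => Polynomial.coeff P 36) H
  have q48 := congrArg (fun P => Polynomial.coeff P 48) H
  have q66 := congrArg (fun P => Polynomial.coeff P 66) H
  have q69 := congrArg (fun P => Polynomial.coeff P 69) H
  have q72 := congrArg (fun P => Polynomial.coeff P 72) H
  have q81 := congrArg (fun P => Polynomial.coeff P 81) H
  have q84 := congrArg (fun P => Polynomial.coeff P 84) H
  have q96 := congrArg (fun P => Polynomial.coeff P 96) H
  have q129 := congrArg (fun P => Polynomial.coeff P 129) H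
  have q132 := congrArg (fun P => Polynomial.coeff P 132) H
  have q144 := congrArg (fun P => Polynomial.coeff P 144) H
  have q192 := congrArg (fun P => Polynomial.coeff P 192) H
  clear H h
  simp only [Polynomial.coeff_add, Polynomial.coeff_C_mul, Polynomial.coeff_X_pow] at q3
  norm_num at q3
  simp only [Polynomial.coeff_add, Polynomial.coeff_C_mul, Polynomial.coeff_X_pow] at q6
  norm_num at q6
  simp only [Polynomial.coeff_add, Polynomial.coeff_C_mul, Polynomial.coeff_X_pow] at q9
  norm_num at q9
  simp only [Polynomial.coeff_add, Polynomial.coeff_C_mul, Polynomial.coeff_X_pow] at q12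
  norm_num at q12
  simp only [Polynomial.coeff_add, Polynomial.coeff_C_mul, Polynomial.coeff_X_pow] at q18
  norm_num at q18
  simp only [Polynomial.coeff_add, Polynomial.coeff_C_mul, Polynomial.coeff_X_pow] at q21
  norm_num at q21
  simp only [Polynomial.coeff_add, Polynomial.coeff_C_mul, Polynomial.coeff_X_pow] at q24
  norm_num at q24
  simp only [Polynomial.coeff_add, Polynomial.coeff_C_mul, Polynomial.coeff_X_pow] at q33
  norm_num at q33
  simp only [Polynomial.coeff_add, Polynomial.coeff_C_mul, Polynomial.coeff_X_pow] at q36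
  norm_num at q36
  simp only [Polynomial.coeff_add, Polynomial.coeff_C_mul, Polynomial.coeff_X_pow] at q48
  norm_num at q48
  simp only [Polynomial.coeff_add, Polynomial.coeff_C_mul, Polynomial.coeff_X_pow] at q66
  norm_num at q66
  simp only [Polynomial.coeff_add, Polynomial.coeff_C_mul, Polynomial.coeff_X_pow] at q69
  norm_num at q69
  simp only [Polynomial.coeff_add, Polynomial.coeff_C_mul, Polynomial.coeff_X_pow] at q72
  norm_num at q72
  simp only [Polynomial.coeff_add, Polynomial.coeff_C_mul, Polynomial.coeff_X_pow] at q81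
  norm_num at q81
  simp only [Polynomial.coeff_add, Polynomial.coeff_C_mul, Polynomial.coeff_X_pow] at q84
  norm_num at q84
  simp only [Polynomial.coeff_add, Polynomial.coeff_C_mul, Polynomial.coeff_X_pow] at q96
  norm_num at q96
  simp only [Polynomial.coeff_add, Polynomial.coeff_C_mul, Polynomial.coeff_X_pow] at q129
  norm_num at q129
  simp only [Polynomial.coeff_add, Polynomial.coeff_C_mul, Polynomial.coeff_X_pow] at q132
  norm_num at q132
  simp only [Polynomial.coeff_add, Polynomial.coeff_C_mul, Polynomial.coeff_X_pow] at q144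
  norm_num at q144
  simp only [Polynomial.coeff_add, Polynomial.coeff_C_mul, Polynomial.coeff_X_pow] at q192
  norm_num at q192
  exact main_contra v q3 q6 q9 q12 q18 q21 q24 q33 q36 q48 q66 q69 q72 q81 q84 q96 q129 q132 q144 q192
end

section
/- The cubic surface f = x_4x_1^2 + x_2^3 + x_3^3 (the normal form D_4^II) can be written as a sum of five cubes of linear forms over ℂ; that is, its rank is at most 5. -/
open MvPolynomial

theorem stmt17 :
    ∃ v : Fin 5 → Fin 4 → ℂ,
      (X 3 * X 0 ^ 2 + X 1 ^ 3 + X 2 ^ 3 : MvPolynomial (Fin 4) ℂ)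
        = ∑ j, (linForm (v j)) ^ 3 := by
  set a : ℂ := (6⁻¹ : ℂ) ^ ((3 : ℕ)⁻¹ : ℂ) with ha
  set c : ℂ := -((3⁻¹ : ℂ) ^ ((3 : ℕ)⁻¹ : ℂ)) with hc
  have ha3 : a ^ 3 = 6⁻¹ := Complex.cpow_nat_inv_pow _ (by norm_num)
  have hc3 : c ^ 3 = -3⁻¹ := by
    rw [hc, neg_pow, Complex.cpow_nat_inv_pow _ (by norm_num : (3:ℕ) ≠ 0)]
    norm_num
  refine ⟨![![a,0,0,a], ![-a,0,0,a], ![0,0,0,c], ![0,1,0,0], ![0,0,1,0]], ?_⟩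
  have hCa : (C a : MvPolynomial (Fin 4) ℂ) ^ 3 = C 6⁻¹ := by
    rw [← map_pow, ha3]
  have hCc : (C c : MvPolynomial (Fin 4) ℂ) ^ 3 = -2 * C 6⁻¹ := by
    rw [← map_pow, hc3, show (-3⁻¹ : ℂ) = -2 * 6⁻¹ by norm_num, map_mul, map_neg,
      map_ofNat]
  have h6 : (C 6⁻¹ : MvPolynomial (Fin 4) ℂ) * 6 = 1 := by
    rw [show (6 : MvPolynomial (Fin 4) ℂ) = C 6 from (map_ofNat _ _).symm, ← map_mul]
    norm_num
  simp only [linForm, Fin.sum_univ_five, Fin.sum_univ_four, Matrix.cons_val_zero,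
    Matrix.cons_val_one, Matrix.head_cons, Matrix.cons_val_two, Matrix.tail_cons,
    Matrix.cons_val_three, Matrix.cons_val_four, map_zero, map_one, map_neg]
  linear_combination (-(6 * X 0 ^ 2 * X 3 + 2 * X 3 ^ 3)) * hCa - X 3 ^ 3 * hCc
    - X 0 ^ 2 * X 3 * h6
end
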